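/- Let M(i,j,U,V) be a configuration of Minsky's universal Turing machine. If (i,j) = (4,3), then t·F(i,j,U,V) = 0 in the algebra H. Otherwise, t·F(i,j,U,V) = F(i',j',U',V')·s in H, where M(i',j',U',V') is the configuration obtained from M(i,j,U,V) by one machine step. -/

import Mathlib

noncomputable section

/-- Direction of the head movement of the Turing machine. -/
inductive Dir
  | L
  | R
deriving DecidableEq

/-- The instruction table of Minsky's universal Turing machine: for a state `i` and a color `j`,
`instr i j` is `some (d, q, p)` where `d` is the direction of the head movement, `q` the new
state and `p` the new color of the current cell; it is `none` exactly for the STOP pair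
`(4, 3)`. -/
def instr : Fin 7 → Fin 4 → Option (Dir × Fin 7 × Fin 4) := fun i j =>
  match i.val, j.val with
  | 0, 0 => some (Dir.L, 4, 1)
  | 0, 1 => some (Dir.L, 1, 3)
  | 0, 2 => some (Dir.R, 0, 0)
  | 0, 3 => some (Dir.R, 0, 1)
  | 1, 0 => some (Dir.L, 1, 2)
  | 1, 1 => some (Dir.L, 1, 3)
  | 1, 2 => some (Dir.R, 0, 0)
  | 1, 3 => some (Dir.L, 1, 3)
  | 2, 0 => some (Dir.R, 2, 2)
  | 2, 1 => some (Dir.R, 2, 1)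
  | 2, 2 => some (Dir.R, 2, 0)
  | 2, 3 => some (Dir.L, 4, 1)
  | 3, 0 => some (Dir.R, 3, 2)
  | 3, 1 => some (Dir.R, 3, 1)
  | 3, 2 => some (Dir.R, 3, 0)
  | 3, 3 => some (Dir.L, 4, 0)
  | 4, 0 => some (Dir.L, 5, 2)
  | 4, 1 => some (Dir.L, 4, 1)
  | 4, 2 => some (Dir.L, 4, 0)
  | 4, 3 => none
  | 5, 0 => some (Dir.L, 5, 2)
  | 5, 1 => some (Dir.L, 5, 1)
  | 5, 2 => some (Dir.L, 6, 2)
  | 5, 3 => some (Dir.R, 2, 1)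
  | 6, 0 => some (Dir.R, 0, 3)
  | 6, 1 => some (Dir.R, 6, 3)
  | 6, 2 => some (Dir.R, 6, 2)
  | 6, 3 => some (Dir.R, 3, 1)
  | _, _ => none

/-- A configuration `M(i, j, U, V)` of the machine: the current state `i`, the color `j` of the
current cell, and the lists `U`, `V` of colors of the tape to the left and to the right of the
head. -/
structure Config where
  state : Fin 7
  color : Fin 4
  left : List (Fin 4)
  right : List (Fin 4)

/-- One step of the machine: for a left pair, `M(i,j,U'++[k],V)` passes to
`M(q i j, k, U', p i j :: V)` and `M(i,j,[],V)` passes to `M(q i j, 0, [], p i j :: V)`;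
for a right pair, `M(i,j,U,k::V')` passes to `M(q i j, k, U ++ [p i j], V')` and
`M(i,j,U,[])` passes to `M(q i j, 0, U ++ [p i j], [])`. No step is possible from the
STOP pair `(4,3)`. -/
def step (c : Config) : Option Config :=
  match instr c.state c.color with
  | none => none
  | some (Dir.L, q, p) =>
    match c.left.reverse with
    | [] => some ⟨q, 0, [], p :: c.right⟩
    | k :: U' => some ⟨q, k, U'.reverse, p :: c.right⟩
  | some (Dir.R, q, p) =>
    match c.right with
    | [] => some ⟨q, 0, c.left ++ [p], []⟩
    | k :: V' => some ⟨q, k, c.left ++ [p], V'⟩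

/-- Iterating `n` steps of the machine. -/
def stepsFrom : ℕ → Config → Option Config
  | 0, c => some c
  | n + 1, c => (step c).bind (stepsFrom n)

/-- The machine halts from the configuration `c` if after finitely many steps it reaches a
configuration whose (state, current color) pair is `(4, 3)`. -/
def Halts (c : Config) : Prop :=
  ∃ n c', stepsFrom n c = some c' ∧ c'.state = 4 ∧ c'.color = 3

/-- The alphabet `Ψ = {t, s, a_0, …, a_3, Q_0, …, Q_6, P_0, …, P_3, L, R}`. -/
inductive Psi
  | t
  | s
  | a (k : Fin 4)
  | Q (i : Fin 7)
  | P (j : Fin 4)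
  | L
  | R
deriving DecidableEq, Fintype

/-- The image in the free algebra of a word over the alphabet `Ψ`. -/
def wrd (K : Type*) [Field K] (l : List Psi) : FreeAlgebra K Psi :=
  (l.map (FreeAlgebra.ι K)).prod

open Psi in
/-- The defining relations of the algebra `H`. -/
inductive HRel (K : Type*) [Field K] : FreeAlgebra K Psi → FreeAlgebra K Psi → Prop
  | rel1 (k : Fin 4) :
      HRel K (wrd K [t, L, a k]) (wrd K [L, t, a k])
  | rel2 (k l : Fin 4) :
      HRel K (wrd K [t, a k, a l]) (wrd K [a k, t, a l])
  | rel9 :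
      HRel K (wrd K [s, R]) (wrd K [R, s])
  | rel8 (k : Fin 4) :
      HRel K (wrd K [s, a k]) (wrd K [a k, s])
  | rel3 (i : Fin 7) (j : Fin 4) (q : Fin 7) (p : Fin 4) (k : Fin 4)
      (h : instr i j = some (Dir.L, q, p)) :
      HRel K (wrd K [t, a k, Q i, P j]) (wrd K [Q q, P k, a p, s])
  | rel5 (i : Fin 7) (j : Fin 4) (q : Fin 7) (p : Fin 4)
      (h : instr i j = some (Dir.L, q, p)) :
      HRel K (wrd K [t, L, Q i, P j]) (wrd K [L, Q q, P 0, a p, s])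
  | rel4 (i : Fin 7) (j : Fin 4) (q : Fin 7) (p : Fin 4) (l k : Fin 4)
      (h : instr i j = some (Dir.R, q, p)) :
      HRel K (wrd K [t, a l, Q i, P j, a k]) (wrd K [a l, a p, Q q, P k, s])
  | rel4b (i : Fin 7) (j : Fin 4) (q : Fin 7) (p : Fin 4) (k : Fin 4)
      (h : instr i j = some (Dir.R, q, p)) :
      HRel K (wrd K [t, L, Q i, P j, a k]) (wrd K [L, a p, Q q, P k, s])
  | rel6 (i : Fin 7) (j : Fin 4) (q : Fin 7) (p : Fin 4) (l : Fin 4)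
      (h : instr i j = some (Dir.R, q, p)) :
      HRel K (wrd K [t, a l, Q i, P j, R]) (wrd K [a l, a p, Q q, P 0, R, s])
  | rel6b (i : Fin 7) (j : Fin 4) (q : Fin 7) (p : Fin 4)
      (h : instr i j = some (Dir.R, q, p)) :
      HRel K (wrd K [t, L, Q i, P j, R]) (wrd K [L, a p, Q q, P 0, R, s])
  | rel7 :
      HRel K (wrd K [Q 4, P 3]) 0

/-- The algebra `H`: the quotient of the free associative unital `K`-algebra on `Ψ` by the
two-sided ideal generated by the defining relations. -/
abbrev AlgH (K : Type*) [Field K] := RingQuot (HRel K)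

/-- The image in `H` of a word over the alphabet `Ψ`. -/
def mkw (K : Type*) [Field K] (l : List Psi) : AlgH K :=
  RingQuot.mkAlgHom K (HRel K) (wrd K l)

/-- The image of the letter `t` in `H`. -/
def tEl (K : Type*) [Field K] : AlgH K := mkw K [Psi.t]

/-- The image of the letter `s` in `H`. -/
def sEl (K : Type*) [Field K] : AlgH K := mkw K [Psi.s]

/-- The word `L a_{u_1} ⋯ a_{u_k} Q_i P_j a_{v_1} ⋯ a_{v_l} R` associated to a configuration. -/
def confWord (c : Config) : List Psi :=
  Psi.L :: (c.left.map Psi.a ++ [Psi.Q c.state, Psi.P c.color] ++ c.right.map Psi.a ++ [Psi.R])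

/-- The element `F(i, j, U, V)` of the algebra `H` associated to a configuration. -/
def F (K : Type*) [Field K] (c : Config) : AlgH K := mkw K (confWord c)

/-! In `H` the letter `t` travels to the right through `L a_{u_1} ⋯ a_{u_k}` by the relations
`t L a_k = L t a_k` and `t a_k a_l = a_k t a_l` until it reaches the letters around the head,
where the relation of the instruction for `(i, j)` turns them into the letters of the next
configuration followed by `s`. Since `s` commutes with every `a_k` and with `R`, it then travels
to the right end of the word. At the STOP pair the word already contains `Q_4 P_3 = 0`. -/

namespace AlgH

open Psi

variable {K : Type*} [Field K]

variable (K) in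
def ι (x : Psi) : AlgH K := RingQuot.mkAlgHom K (HRel K) (FreeAlgebra.ι K x)

variable (K) in
def tape (W : List (Fin 4)) : AlgH K := (W.map (ι K ∘ a)).prod

@[simp] lemma tape_nil : tape K [] = 1 := rfl

@[simp] lemma tape_cons (k : Fin 4) (W : List (Fin 4)) :
    tape K (k :: W) = ι K (a k) * tape K W := List.prod_cons

@[simp] lemma tape_append (U W : List (Fin 4)) : tape K (U ++ W) = tape K U * tape K W := by
  simp [tape]

lemma mkw_eq_prod (l : List Psi) : mkw K l = (l.map (ι K)).prod := by
  simp only [mkw, wrd, map_list_prod, List.map_map]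
  rfl

lemma tEl_eq : tEl K = ι K t := by simp [tEl, mkw_eq_prod]

lemma sEl_eq : sEl K = ι K s := by simp [sEl, mkw_eq_prod]

lemma F_eq (c : Config) :
    F K c = ι K L * (tape K c.left * (ι K (Q c.state) * (ι K (P c.color) *
      (tape K c.right * ι K R)))) := by
  simp [F, confWord, mkw_eq_prod, tape]

lemma prod_map_ι_eq_of_rel {l₁ l₂ : List Psi} (h : HRel K (wrd K l₁) (wrd K l₂)) :
    (l₁.map (ι K)).prod = (l₂.map (ι K)).prod := by
  rw [← mkw_eq_prod, ← mkw_eq_prod]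
  exact RingQuot.mkAlgHom_rel K h

-- Relations are stated right-associated and with an arbitrary right factor `x`, so that they
-- rewrite inside the right-associated products produced by `F_eq`.
lemma t_mul_L_mul_a (k : Fin 4) (x : AlgH K) :
    ι K t * (ι K L * (ι K (a k) * x)) = ι K L * (ι K t * (ι K (a k) * x)) := by
  simpa [mul_assoc] using congrArg (· * x) (prod_map_ι_eq_of_rel (HRel.rel1 (K := K) k))

lemma t_mul_a_mul_a (k l : Fin 4) (x : AlgH K) :
    ι K t * (ι K (a k) * (ι K (a l) * x)) = ι K (a k) * (ι K t * (ι K (a l) * x)) := by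
  simpa [mul_assoc] using congrArg (· * x) (prod_map_ι_eq_of_rel (HRel.rel2 (K := K) k l))

lemma commute_s_R : Commute (ι K s) (ι K R) := by
  show _ = _
  simpa using prod_map_ι_eq_of_rel (HRel.rel9 (K := K))

lemma commute_s_a (k : Fin 4) : Commute (ι K s) (ι K (a k)) := by
  show _ = _
  simpa using prod_map_ι_eq_of_rel (HRel.rel8 (K := K) k)

section Instructions

variable {i : Fin 7} {j : Fin 4} {q : Fin 7} {p : Fin 4}

lemma t_mul_a_Q_P_of_left (h : instr i j = some (Dir.L, q, p)) (k : Fin 4) (x : AlgH K) :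
    ι K t * (ι K (a k) * (ι K (Q i) * (ι K (P j) * x))) =
      ι K (Q q) * (ι K (P k) * (ι K (a p) * (ι K s * x))) := by
  simpa [mul_assoc] using congrArg (· * x) (prod_map_ι_eq_of_rel (HRel.rel3 (K := K) i j q p k h))

lemma t_mul_L_Q_P_of_left (h : instr i j = some (Dir.L, q, p)) (x : AlgH K) :
    ι K t * (ι K L * (ι K (Q i) * (ι K (P j) * x))) =
      ι K L * (ι K (Q q) * (ι K (P 0) * (ι K (a p) * (ι K s * x)))) := by
  simpa [mul_assoc] using congrArg (· * x) (prod_map_ι_eq_of_rel (HRel.rel5 (K := K) i j q p h))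

lemma t_mul_a_Q_P_a_of_right (h : instr i j = some (Dir.R, q, p)) (l k : Fin 4) (x : AlgH K) :
    ι K t * (ι K (a l) * (ι K (Q i) * (ι K (P j) * (ι K (a k) * x)))) =
      ι K (a l) * (ι K (a p) * (ι K (Q q) * (ι K (P k) * (ι K s * x)))) := by
  simpa [mul_assoc] using
    congrArg (· * x) (prod_map_ι_eq_of_rel (HRel.rel4 (K := K) i j q p l k h))

lemma t_mul_L_Q_P_a_of_right (h : instr i j = some (Dir.R, q, p)) (k : Fin 4) (x : AlgH K) :
    ι K t * (ι K L * (ι K (Q i) * (ι K (P j) * (ι K (a k) * x)))) =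
      ι K L * (ι K (a p) * (ι K (Q q) * (ι K (P k) * (ι K s * x)))) := by
  simpa [mul_assoc] using
    congrArg (· * x) (prod_map_ι_eq_of_rel (HRel.rel4b (K := K) i j q p k h))

lemma t_mul_a_Q_P_R_of_right (h : instr i j = some (Dir.R, q, p)) (l : Fin 4) :
    ι K t * (ι K (a l) * (ι K (Q i) * (ι K (P j) * ι K R))) =
      ι K (a l) * (ι K (a p) * (ι K (Q q) * (ι K (P 0) * (ι K R * ι K s)))) := by
  simpa using prod_map_ι_eq_of_rel (HRel.rel6 (K := K) i j q p l h)

lemma t_mul_L_Q_P_R_of_right (h : instr i j = some (Dir.R, q, p)) :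
    ι K t * (ι K L * (ι K (Q i) * (ι K (P j) * ι K R))) =
      ι K L * (ι K (a p) * (ι K (Q q) * (ι K (P 0) * (ι K R * ι K s)))) := by
  simpa using prod_map_ι_eq_of_rel (HRel.rel6b (K := K) i j q p h)

end Instructions

lemma Q_four_mul_P_three_mul (x : AlgH K) : ι K (Q 4) * (ι K (P 3) * x) = 0 := by
  have hQP : mkw K [Q 4, P 3] = 0 := (RingQuot.mkAlgHom_rel K HRel.rel7).trans (map_zero _)
  simp only [mkw_eq_prod, List.map_cons, List.map_nil, List.prod_cons, List.prod_nil,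
    mul_one] at hQP
  rw [← mul_assoc, hQP, zero_mul]

lemma t_mul_L_tape_mul_a (W : List (Fin 4)) (k : Fin 4) (x : AlgH K) :
    ι K t * (ι K L * (tape K W * (ι K (a k) * x))) =
      ι K L * (tape K W * (ι K t * (ι K (a k) * x))) := by
  induction W using List.reverseRecOn generalizing k x with
  | nil => simpa using t_mul_L_mul_a k x
  | append_singleton W w ih =>
    simp only [tape_append, tape_cons, tape_nil, mul_one, mul_assoc]
    rw [ih, t_mul_a_mul_a]

lemma s_mul_tape_mul_R (V : List (Fin 4)) :
    ι K s * (tape K V * ι K R) = tape K V * (ι K R * ι K s) := by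
  induction V with
  | nil => simpa using commute_s_R.eq
  | cons v V ih => rw [tape_cons, mul_assoc, (commute_s_a v).left_comm, ih, mul_assoc]

end AlgH

lemma instr_eq_none_iff (i : Fin 7) (j : Fin 4) : instr i j = none ↔ i = 4 ∧ j = 3 := by
  revert i j
  decide

lemma exists_step_eq_some {c : Config} (hc : ¬ (c.state = 4 ∧ c.color = 3)) :
    ∃ c', step c = some c' := by
  rw [← instr_eq_none_iff] at hc
  unfold step
  rcases h : instr c.state c.color with _ | ⟨_ | _, q, p⟩
  · exact absurd h hc
  · rcases c.left.reverse <;> exact ⟨_, rfl⟩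
  · rcases c.right <;> exact ⟨_, rfl⟩

open AlgH Psi in
lemma t_mul_F_of_step {K : Type*} [Field K] {c c' : Config} (h : step c = some c') :
    tEl K * F K c = F K c' * sEl K := by
  obtain ⟨i, j, U, V⟩ := c
  unfold step at h
  rw [tEl_eq, sEl_eq, F_eq, F_eq]
  rcases hij : instr i j with _ | ⟨_ | _, q, p⟩ <;> simp only [hij, reduceCtorEq] at h
  · rcases U.eq_nil_or_concat' with rfl | ⟨U, k, rfl⟩ <;>
      simp only [List.reverse_nil, List.reverse_append, List.reverse_cons, List.reverse_reverse,
        List.nil_append, List.singleton_append, Option.some.injEq] at h <;> subst h <;>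
      simp only [tape_nil, tape_cons, tape_append, one_mul, mul_one, mul_assoc]
    · rw [t_mul_L_Q_P_of_left hij, s_mul_tape_mul_R]
    · rw [t_mul_L_tape_mul_a, t_mul_a_Q_P_of_left hij, s_mul_tape_mul_R]
  · rcases V with _ | ⟨v, V⟩ <;> simp only [Option.some.injEq] at h <;> subst h <;>
      rcases U.eq_nil_or_concat' with rfl | ⟨U, k, rfl⟩ <;>
      simp only [tape_nil, tape_cons, tape_append, one_mul, mul_one, mul_assoc]
    · rw [t_mul_L_Q_P_R_of_right hij]
    · rw [t_mul_L_tape_mul_a, t_mul_a_Q_P_R_of_right hij]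
    · rw [t_mul_L_Q_P_a_of_right hij, s_mul_tape_mul_R]
    · rw [t_mul_L_tape_mul_a, t_mul_a_Q_P_a_of_right hij, s_mul_tape_mul_R]

/-- If `(i, j) = (4, 3)` then `t · F(i,j,U,V) = 0` in the algebra `H`;
otherwise `t · F(i,j,U,V) = F(i',j',U',V') · s` in `H`, where `M(i',j',U',V')` is the
configuration obtained from `M(i,j,U,V)` by one machine step. -/
theorem t_mul_F (K : Type*) [Field K] (c : Config) :
    (c.state = 4 ∧ c.color = 3 → tEl K * F K c = 0) ∧
    (¬ (c.state = 4 ∧ c.color = 3) →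
      ∃ c', step c = some c' ∧ tEl K * F K c = F K c' * sEl K) := by
  refine ⟨fun ⟨hi, hj⟩ => ?_, fun hc => ?_⟩
  · rw [AlgH.F_eq, hi, hj, AlgH.Q_four_mul_P_three_mul, mul_zero, mul_zero, mul_zero]
  · obtain ⟨c', hc'⟩ := exists_step_eq_some hc
    exact ⟨c', hc', t_mul_F_of_step hc'⟩
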